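/- arXiv:2001.08645 — 7 statements merged into one kernel-verified Lean document; each statement's English description precedes it below -/
import Mathlib

section
/- Fix M > 0 and ℓ > 12M². Then the critical values of the Schwarzschild effective potential are given by E_ℓ^Sch(r_min^Sch(ℓ)) = 8/9 + (ℓ − 12M²)/(9M·r_min^Sch(ℓ)) and E_ℓ^Sch(r_max^Sch(ℓ)) = 8/9 + (ℓ − 12M²)/(9M·r_max^Sch(ℓ)). -/
/-- The Schwarzschild effective potential `E_ℓ^Sch(r) = (1 - 2M/r)(1 + ℓ/r²)`. -/
noncomputable def Esch (M ℓ r : ℝ) : ℝ := (1 - 2*M/r) * (1 + ℓ/r^2)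

/-- `r_max^Sch(ℓ)`, the location of the maximum of the effective potential. -/
noncomputable def rmaxSch (M ℓ : ℝ) : ℝ := ℓ/(2*M) * (1 - Real.sqrt (1 - 12*M^2/ℓ))

/-- `r_min^Sch(ℓ)`, the location of the minimum of the effective potential. -/
noncomputable def rminSch (M ℓ : ℝ) : ℝ := ℓ/(2*M) * (1 + Real.sqrt (1 - 12*M^2/ℓ))

/-! The critical points of `Esch M ℓ` are the roots of `M r² - ℓ r + 3Mℓ`, since
`d/dr Esch M ℓ r = 2 (M r² - ℓ r + 3Mℓ) / r⁴`. On such a root `ℓ (r - 3M) = M r²` eliminates `ℓ`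
from the potential, and what remains is `8/9 + (ℓ - 12M²)/(9Mr)`. -/

lemma Esch_eq_of_critical {M ℓ r : ℝ} (hM : M ≠ 0) (hr : r ≠ 0)
    (hcrit : M * r^2 - ℓ * r + 3 * M * ℓ = 0) :
    Esch M ℓ r = 8/9 + (ℓ - 12*M^2)/(9*M*r) := by
  unfold Esch
  field_simp
  linear_combination (r - 6 * M) * hcrit

lemma critical_of_sq_eq {M ℓ σ : ℝ} (hM : M ≠ 0) (hℓ : ℓ ≠ 0) (hσ : σ^2 = 1 - 12*M^2/ℓ) :
    M * (ℓ/(2*M) * (1 + σ))^2 - ℓ * (ℓ/(2*M) * (1 + σ)) + 3 * M * ℓ = 0 := by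
  have hσℓ : σ^2 * ℓ = ℓ - 12*M^2 := by rw [hσ]; field_simp
  field_simp
  linear_combination ℓ * hσℓ

theorem stmt1 (M ℓ : ℝ) (hM : 0 < M) (hℓ : 12*M^2 < ℓ) :
    Esch M ℓ (rminSch M ℓ) = 8/9 + (ℓ - 12*M^2)/(9*M*rminSch M ℓ) ∧
    Esch M ℓ (rmaxSch M ℓ) = 8/9 + (ℓ - 12*M^2)/(9*M*rmaxSch M ℓ) := by
  have hℓ₀ : 0 < ℓ := lt_trans (by positivity) hℓ
  have hℓM : 0 < 12*M^2/ℓ := by positivity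
  set s := Real.sqrt (1 - 12*M^2/ℓ)
  have hs : s^2 = 1 - 12*M^2/ℓ := Real.sq_sqrt (by rw [sub_nonneg, div_le_one hℓ₀]; exact hℓ.le)
  have hs₀ : 0 ≤ s := Real.sqrt_nonneg _
  have hs₁ : s < 1 := (Real.sqrt_lt' one_pos).2 (by linarith)
  have hfac : 0 < ℓ/(2*M) := by positivity
  have hmin : rminSch M ℓ ≠ 0 := (mul_pos hfac (by linarith)).ne'
  have hmax : rmaxSch M ℓ ≠ 0 := (mul_pos hfac (by linarith)).ne'
  refine ⟨Esch_eq_of_critical hM.ne' hmin (critical_of_sq_eq hM.ne' hℓ₀.ne' hs), ?_⟩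
  refine Esch_eq_of_critical hM.ne' hmax ?_
  have hcrit := critical_of_sq_eq hM.ne' hℓ₀.ne' (σ := -s) (by rwa [neg_sq])
  rwa [← sub_eq_add_neg] at hcrit
end

section
/- Fix M > 0 and 0 ≤ ℓ ≤ 12M². Then the Schwarzschild effective potential E_ℓ^Sch is strictly increasing on (2M, ∞), tends to 0 as r → 2M⁺, and tends to 1 as r → ∞. Consequently, for every E with 0 < E² < 1 the equation E_ℓ^Sch(r) = E² has exactly one solution in (2M, ∞), and for E² ≥ 1 it has no solution in (2M, ∞). -/
open Set Filter Topology

section StrictMonoOnIoi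

variable {f : ℝ → ℝ} {a L₀ L₁ : ℝ}

theorem StrictMonoOn.lt_of_tendsto_atTop (hf : StrictMonoOn f (Ioi a))
    (h₁ : Tendsto f atTop (𝓝 L₁)) {x : ℝ} (hx : x ∈ Ioi a) : f x < L₁ := by
  have hx₁ : x + 1 ∈ Ioi a := mem_Ioi.2 ((mem_Ioi.1 hx).trans (lt_add_one x))
  refine (hf hx hx₁ (lt_add_one x)).trans_le (ge_of_tendsto h₁ ?_)
  filter_upwards [eventually_ge_atTop (x + 1)] with s hs
  exact hf.monotoneOn hx₁ (lt_of_lt_of_le hx₁ hs) hs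

theorem StrictMonoOn.existsUnique_eq_of_tendsto (hf : StrictMonoOn f (Ioi a))
    (hcont : ContinuousOn f (Ioi a)) (h₀ : Tendsto f (𝓝[>] a) (𝓝 L₀))
    (h₁ : Tendsto f atTop (𝓝 L₁)) {c : ℝ} (hc₀ : L₀ < c) (hc₁ : c < L₁) :
    ∃! r, r ∈ Ioi a ∧ f r = c := by
  obtain ⟨x, hxc, hx⟩ := ((h₀.eventually (gt_mem_nhds hc₀)).and self_mem_nhdsWithin).exists
  obtain ⟨y, hyc, hy⟩ := ((h₁.eventually (lt_mem_nhds hc₁)).and (eventually_gt_atTop a)).exists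
  obtain ⟨r, hr, hrc⟩ := hcont.surjOn_Icc hx hy ⟨hxc.le, hyc.le⟩
  exact ⟨r, ⟨hr, hrc⟩, fun s ⟨hs, hsc⟩ => hf.injOn hs hr (hsc.trans hrc.symm)⟩

end StrictMonoOnIoi

section Schwarzschild

variable {M ℓ x y r : ℝ}

def eschSlopeNum (M ℓ x y : ℝ) : ℝ :=
  2*M*x^2*y^2 + ℓ*(2*M*(x^2 + x*y + y^2) - x*y*(x + y))

theorem Esch_sub_Esch (hx : x ≠ 0) (hy : y ≠ 0) :
    Esch M ℓ y - Esch M ℓ x = (y - x) * eschSlopeNum M ℓ x y / (x^3 * y^3) := by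
  unfold Esch eschSlopeNum
  field_simp
  ring

theorem eschSlopeNum_twelve_mul_sq :
    eschSlopeNum M (12*M^2) x y = 2*M*(x*y - 3*M*(x + y))^2 + 6*M^3*(x - y)^2 := by
  unfold eschSlopeNum
  ring

theorem twelve_mul_sq_mul_eschSlopeNum :
    12*M^2 * eschSlopeNum M ℓ x y =
      (12*M^2 - ℓ) * eschSlopeNum M 0 x y + ℓ * eschSlopeNum M (12*M^2) x y := by
  unfold eschSlopeNum
  ring

theorem eschSlopeNum_pos (hM : 0 < M) (hℓ0 : 0 ≤ ℓ) (hℓ : ℓ ≤ 12*M^2) (hx : x ≠ 0)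
    (hy : y ≠ 0) (hxy : x ≠ y) : 0 < eschSlopeNum M ℓ x y := by
  have h₀ : 0 < eschSlopeNum M 0 x y := by
    simp only [eschSlopeNum, zero_mul, add_zero]
    positivity
  have h₁₂ : 0 < eschSlopeNum M (12*M^2) x y := by
    have := sub_ne_zero.2 hxy
    rw [eschSlopeNum_twelve_mul_sq]
    positivity
  rcases hℓ.lt_or_eq with hlt | rfl
  · refine pos_of_mul_pos_right (a := 12*M^2) ?_ (by positivity)
    rw [twelve_mul_sq_mul_eschSlopeNum]
    exact add_pos_of_pos_of_nonneg (mul_pos (sub_pos.2 hlt) h₀) (mul_nonneg hℓ0 h₁₂.le)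
  · exact h₁₂

theorem Esch_strictMonoOn (hM : 0 < M) (hℓ0 : 0 ≤ ℓ) (hℓ : ℓ ≤ 12*M^2) :
    StrictMonoOn (Esch M ℓ) (Ioi 0) := by
  intro x (hx : 0 < x) y (hy : 0 < y) hxy
  rw [← sub_pos, Esch_sub_Esch hx.ne' hy.ne']
  have := eschSlopeNum_pos hM hℓ0 hℓ hx.ne' hy.ne' hxy.ne
  have := sub_pos.2 hxy
  positivity

theorem Esch_continuousAt (hr : r ≠ 0) : ContinuousAt (Esch M ℓ) r := by
  unfold Esch
  fun_prop (disch := simp [hr])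

theorem Esch_two_mul_self (hM : M ≠ 0) : Esch M ℓ (2*M) = 0 := by
  simp [Esch, hM]

theorem Esch_tendsto_nhdsGT (hM : M ≠ 0) : Tendsto (Esch M ℓ) (𝓝[>] (2*M)) (𝓝 0) := by
  rw [← Esch_two_mul_self (ℓ := ℓ) hM]
  exact (Esch_continuousAt (mul_ne_zero two_ne_zero hM)).tendsto.mono_left nhdsWithin_le_nhds

theorem Esch_tendsto_atTop : Tendsto (Esch M ℓ) atTop (𝓝 1) := by
  have h₁ : Tendsto (fun r : ℝ => 2*M/r) atTop (𝓝 0) := tendsto_const_nhds.div_atTop tendsto_id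
  have h₂ : Tendsto (fun r : ℝ => ℓ/r^2) atTop (𝓝 0) :=
    tendsto_const_nhds.div_atTop (tendsto_pow_atTop two_ne_zero)
  unfold Esch
  simpa using ((tendsto_const_nhds (x := (1 : ℝ))).sub h₁).mul (tendsto_const_nhds.add h₂)

end Schwarzschild

theorem stmt2 (M ℓ : ℝ) (hM : 0 < M) (hℓ0 : 0 ≤ ℓ) (hℓ : ℓ ≤ 12*M^2) :
    StrictMonoOn (Esch M ℓ) (Set.Ioi (2*M)) ∧
    Filter.Tendsto (Esch M ℓ) (nhdsWithin (2*M) (Set.Ioi (2*M))) (nhds 0) ∧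
    Filter.Tendsto (Esch M ℓ) Filter.atTop (nhds 1) ∧
    (∀ E : ℝ, 0 < E^2 → E^2 < 1 → ∃! r, r ∈ Set.Ioi (2*M) ∧ Esch M ℓ r = E^2) ∧
    (∀ E : ℝ, 1 ≤ E^2 → ∀ r ∈ Set.Ioi (2*M), Esch M ℓ r ≠ E^2) := by
  have hmono : StrictMonoOn (Esch M ℓ) (Ioi (2*M)) :=
    (Esch_strictMonoOn hM hℓ0 hℓ).mono (Ioi_subset_Ioi (by positivity))
  have hcont : ContinuousOn (Esch M ℓ) (Ioi (2*M)) := fun r (hr : 2*M < r) =>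
    (Esch_continuousAt (lt_trans (by positivity) hr).ne').continuousWithinAt
  have h₀ : Tendsto (Esch M ℓ) (𝓝[>] (2*M)) (𝓝 0) := Esch_tendsto_nhdsGT hM.ne'
  have h₁ : Tendsto (Esch M ℓ) atTop (𝓝 1) := Esch_tendsto_atTop
  refine ⟨hmono, h₀, h₁, fun E hE₀ hE₁ => hmono.existsUnique_eq_of_tendsto hcont h₀ h₁ hE₀ hE₁,
    fun E hE r hr => ((hmono.lt_of_tendsto_atTop h₁ hr).trans_le hE).ne⟩
end

section
/- Fix M > 0 and set ℓ = 12M². Then r = 6M is the unique solution in (2M, ∞) of the equation E_ℓ^Sch(r) = 8/9, and it is a triple root: E_ℓ^Sch(6M) = 8/9, (E_ℓ^Sch)'(6M) = 0, and (E_ℓ^Sch)''(6M) = 0. -/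
theorem hasDerivAt_sub_sq_mul_zero {𝕜 : Type*} [NontriviallyNormedField 𝕜] {g : 𝕜 → 𝕜} {a : 𝕜}
    (hg : DifferentiableAt 𝕜 g a) : HasDerivAt (fun x => (x - a) ^ 2 * g x) 0 a :=
  ((((hasDerivAt_id' a).sub_const a).fun_pow 2).mul hg.hasDerivAt).congr_deriv (by simp)

theorem hasDerivAt_esch (M ℓ : ℝ) {r : ℝ} (hr : r ≠ 0) :
    HasDerivAt (Esch M ℓ) (2*M/r^2 - 2*ℓ/r^3 + 6*M*ℓ/r^4) r := by
  have h1 := ((hasDerivAt_const r (2*M)).fun_div (hasDerivAt_id' r) hr).const_sub 1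
  have h2 := ((hasDerivAt_const r ℓ).fun_div (hasDerivAt_pow 2 r) (pow_ne_zero 2 hr)).const_add 1
  refine (h1.mul h2).congr_deriv ?_
  field_simp
  ring

theorem esch_twelve_sub_eight_ninths (M : ℝ) {r : ℝ} (hr : r ≠ 0) :
    Esch M (12*M^2) r - 8/9 = (r - 6*M)^3 / (9*r^3) := by
  unfold Esch
  field_simp
  ring

theorem esch_twelve_eq_eight_ninths_iff (M : ℝ) {r : ℝ} (hr : r ≠ 0) :
    Esch M (12*M^2) r = 8/9 ↔ r = 6*M := by
  rw [← sub_eq_zero, esch_twelve_sub_eight_ninths M hr]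
  simp [hr, sub_eq_zero]

theorem hasDerivAt_esch_twelve (M : ℝ) {r : ℝ} (hr : r ≠ 0) :
    HasDerivAt (Esch M (12*M^2)) ((r - 6*M)^2 * (2*M/r^4)) r := by
  refine (hasDerivAt_esch M (12*M^2) hr).congr_deriv ?_
  field_simp
  ring

theorem stmt3 (M : ℝ) (hM : 0 < M) :
    (∀ r ∈ Set.Ioi (2*M), (Esch M (12*M^2) r = 8/9 ↔ r = 6*M)) ∧
    Esch M (12*M^2) (6*M) = 8/9 ∧
    deriv (Esch M (12*M^2)) (6*M) = 0 ∧
    deriv (deriv (Esch M (12*M^2))) (6*M) = 0 := by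
  have h6M : (6:ℝ)*M ≠ 0 := by positivity
  have hderiv : deriv (Esch M (12*M^2)) =ᶠ[nhds (6*M)] fun r => (r - 6*M)^2 * (2*M/r^4) := by
    filter_upwards [eventually_ne_nhds h6M] with r hr
    exact (hasDerivAt_esch_twelve M hr).deriv
  refine ⟨fun r hr => esch_twelve_eq_eight_ninths_iff M (by linarith [Set.mem_Ioi.mp hr]),
    (esch_twelve_eq_eight_ninths_iff M h6M).mpr rfl, ?_, ?_⟩
  · simp [(hasDerivAt_esch_twelve M h6M).deriv]
  · rw [hderiv.deriv_eq]
    exact (hasDerivAt_sub_sq_mul_zero (by fun_prop (disch := positivity))).deriv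
end

section
/- Fix M > 0 and E with √(8/9) < E < 1. Then ℓ_lb(E) > 12M² and ℓ_ub(E) > 12M², and they solve the critical-value equations: E_{ℓ_ub(E)}^Sch(r_min^Sch(ℓ_ub(E))) = E² (i.e. E^min(ℓ_ub(E)) = E²) and E_{ℓ_lb(E)}^Sch(r_max^Sch(ℓ_lb(E))) = E² (i.e. E^max(ℓ_lb(E)) = E²). -/
/-- `ℓ_lb(E) = 12M²/(1 - 4α - 8α² + 8α√(α² + α))` with `α = (9/8)E² - 1`. -/
noncomputable def llb (M E : ℝ) : ℝ :=
  12*M^2 / (1 - 4*(9/8*E^2-1) - 8*(9/8*E^2-1)^2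
    + 8*(9/8*E^2-1)*Real.sqrt ((9/8*E^2-1)^2 + (9/8*E^2-1)))

/-- `ℓ_ub(E) = 12M²/(1 - 4α - 8α² - 8α√(α² + α))` with `α = (9/8)E² - 1`. -/
noncomputable def lub (M E : ℝ) : ℝ :=
  12*M^2 / (1 - 4*(9/8*E^2-1) - 8*(9/8*E^2-1)^2
    - 8*(9/8*E^2-1)*Real.sqrt ((9/8*E^2-1)^2 + (9/8*E^2-1)))

open Real

section CriticalPoints

variable {M t : ℝ}

lemma twelve_mul_sq_lt_div_one_sub_sq (hM : 0 < M) (ht0 : t ≠ 0) (ht : t ^ 2 < 1) :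
    12 * M ^ 2 < 12 * M ^ 2 / (1 - t ^ 2) := by
  have ht2 : 0 < t ^ 2 := by positivity
  rw [lt_div_iff₀ (by linarith)]
  nlinarith [mul_pos (by positivity : (0 : ℝ) < 12 * M ^ 2) ht2]

lemma div_two_mul_mul_one_add (hM : M ≠ 0) (ht1 : t ≠ 1) (ht : t ≠ -1) :
    12 * M ^ 2 / (1 - t ^ 2) / (2 * M) * (1 + t) = 6 * M / (1 - t) := by
  have h1 : 1 - t ≠ 0 := sub_ne_zero.mpr (Ne.symm ht1)
  have h2 : 1 + t ≠ 0 := fun h => ht (by linarith)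
  rw [show 1 - t ^ 2 = (1 - t) * (1 + t) by ring]
  field_simp
  ring

lemma sqrt_one_sub_twelve_mul_sq_div (hM : M ≠ 0) (ht : t ^ 2 ≠ 1) :
    √(1 - 12 * M ^ 2 / (12 * M ^ 2 / (1 - t ^ 2))) = |t| := by
  have h : 1 - t ^ 2 ≠ 0 := sub_ne_zero.mpr (Ne.symm ht)
  rw [div_div_cancel₀ (by positivity), sub_sub_cancel, sqrt_sq_eq_abs]

lemma rminSch_twelve_mul_sq_div (hM : M ≠ 0) (ht0 : 0 ≤ t) (ht1 : t < 1) :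
    rminSch M (12 * M ^ 2 / (1 - t ^ 2)) = 6 * M / (1 - t) := by
  rw [rminSch, sqrt_one_sub_twelve_mul_sq_div hM (by nlinarith), abs_of_nonneg ht0,
    div_two_mul_mul_one_add hM ht1.ne (by linarith)]

lemma rmaxSch_twelve_mul_sq_div (hM : M ≠ 0) (ht0 : t ≤ 0) (ht1 : -1 < t) :
    rmaxSch M (12 * M ^ 2 / (1 - t ^ 2)) = 6 * M / (1 - t) := by
  rw [rmaxSch, sqrt_one_sub_twelve_mul_sq_div hM (by nlinarith), abs_of_nonpos ht0, sub_neg_eq_add,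
    div_two_mul_mul_one_add hM (by linarith) ht1.ne']

lemma Esch_six_mul_div_one_sub (hM : M ≠ 0) (ht1 : t ≠ 1) (ht : t ≠ -1) :
    Esch M (12 * M ^ 2 / (1 - t ^ 2)) (6 * M / (1 - t)) = 2 * (2 + t) ^ 2 / (9 * (1 + t)) := by
  have h1 : 1 - t ≠ 0 := sub_ne_zero.mpr (Ne.symm ht1)
  have h2 : 1 + t ≠ 0 := fun h => ht (by linarith)
  rw [Esch, show 1 - t ^ 2 = (1 - t) * (1 + t) by ring]
  field_simp
  ring

lemma critical_value_eq_of_sq_eq {α : ℝ} (ht : t ≠ -1) (hq : t ^ 2 = 4 * α * t + 4 * α) :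
    2 * (2 + t) ^ 2 / (9 * (1 + t)) = 8 * (1 + α) / 9 := by
  have h : 1 + t ≠ 0 := fun h => ht (by linarith)
  rw [div_eq_div_iff (by positivity) (by norm_num)]
  linear_combination 18 * hq

end CriticalPoints

section Roots

variable {α : ℝ}

lemma two_mul_add_two_mul_sqrt_mem_Ioo (hα0 : 0 < α) (hα1 : α < 1 / 8) :
    2 * α + 2 * √(α ^ 2 + α) ∈ Set.Ioo 0 1 := by
  have hs := sq_sqrt (by positivity : 0 ≤ α ^ 2 + α)
  have hs0 := sqrt_nonneg (α ^ 2 + α)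
  constructor <;> nlinarith

lemma two_mul_sub_two_mul_sqrt_mem_Ioo (hα0 : 0 < α) :
    2 * α - 2 * √(α ^ 2 + α) ∈ Set.Ioo (-1) 0 := by
  have hs := sq_sqrt (by positivity : 0 ≤ α ^ 2 + α)
  have hs0 := sqrt_nonneg (α ^ 2 + α)
  constructor <;> nlinarith

variable {E : ℝ} (M : ℝ)

lemma lub_eq (hα : 9 / 8 * E ^ 2 - 1 = α) (h : 0 ≤ α ^ 2 + α) :
    lub M E = 12 * M ^ 2 / (1 - (2 * α + 2 * √(α ^ 2 + α)) ^ 2) := by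
  rw [lub, hα]
  congr 1
  linear_combination 4 * sq_sqrt h

lemma llb_eq (hα : 9 / 8 * E ^ 2 - 1 = α) (h : 0 ≤ α ^ 2 + α) :
    llb M E = 12 * M ^ 2 / (1 - (2 * α - 2 * √(α ^ 2 + α)) ^ 2) := by
  rw [llb, hα]
  congr 1
  linear_combination 4 * sq_sqrt h

end Roots

theorem stmt7 (M E : ℝ) (hM : 0 < M) (h1 : Real.sqrt (8/9) < E) (h2 : E < 1) :
    12*M^2 < llb M E ∧ 12*M^2 < lub M E ∧
    Esch M (lub M E) (rminSch M (lub M E)) = E^2 ∧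
    Esch M (llb M E) (rmaxSch M (llb M E)) = E^2 := by
  have hE : 8 / 9 < E ^ 2 := by
    nlinarith [sq_sqrt (by norm_num : (0 : ℝ) ≤ 8 / 9), sqrt_nonneg (8 / 9 : ℝ)]
  have hE1 : E ^ 2 < 1 := by nlinarith [sqrt_nonneg (8 / 9 : ℝ)]
  obtain ⟨α, hα⟩ : ∃ α, 9 / 8 * E ^ 2 - 1 = α := ⟨_, rfl⟩
  have hα0 : 0 < α := by linarith
  have hs := sq_sqrt (by positivity : 0 ≤ α ^ 2 + α)
  obtain ⟨hp0, hp1⟩ := two_mul_add_two_mul_sqrt_mem_Ioo hα0 (by linarith)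
  obtain ⟨hm0, hm1⟩ := two_mul_sub_two_mul_sqrt_mem_Ioo hα0
  have hE2 : E ^ 2 = 8 * (1 + α) / 9 := by linarith
  rw [lub_eq M hα (by positivity), llb_eq M hα (by positivity),
    rminSch_twelve_mul_sq_div hM.ne' hp0.le hp1, rmaxSch_twelve_mul_sq_div hM.ne' hm1.le hm0,
    Esch_six_mul_div_one_sub hM.ne' hp1.ne (by linarith),
    Esch_six_mul_div_one_sub hM.ne' (by linarith) hm0.ne',
    critical_value_eq_of_sq_eq (by linarith) (by linear_combination 4 * hs),
    critical_value_eq_of_sq_eq (by linarith) (by linear_combination 4 * hs), hE2]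
  exact ⟨twelve_mul_sq_lt_div_one_sub_sq hM hm1.ne (by nlinarith),
    twelve_mul_sq_lt_div_one_sub_sq hM hp0.ne' (by nlinarith), rfl, rfl⟩
end

section
/- Fix M > 0 and E, ℓ with E² ≥ 1, and assume either 0 ≤ ℓ ≤ 12M², or ℓ > 12M² and E² > E^max(ℓ). Then E_ℓ^Sch(r) < E² for every r ∈ (2M, ∞); in particular the equation E_ℓ^Sch(r) = E² has no solution in (2M, ∞). -/
theorem one_sub_Esch (M ℓ : ℝ) {r : ℝ} (hr : r ≠ 0) :
    1 - Esch M ℓ r = (2*M*r^2 - ℓ*r + 2*M*ℓ) / r^3 := by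
  unfold Esch; field_simp; ring

theorem Esch_lt_one {M ℓ r : ℝ} (hM : 0 < M) (hℓ : 0 ≤ ℓ) (hℓ16 : ℓ < 16*M^2) (hr : 0 < r) :
    Esch M ℓ r < 1 := by
  rw [← sub_pos, one_sub_Esch M ℓ hr.ne']
  -- completing the square: `8M(2Mr² - ℓr + 2Mℓ) = (4Mr - ℓ)² + ℓ(16M² - ℓ)`
  have : 0 < 2*M*r^2 - ℓ*r + 2*M*ℓ := by
    rcases hℓ.eq_or_lt with rfl | hℓ
    · simp only [mul_zero, zero_mul, sub_zero, add_zero]; positivity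
    · nlinarith [sq_nonneg (4*M*r - ℓ), mul_pos hℓ (sub_pos.2 hℓ16)]
  positivity

-- `M a² - ℓ a + 3Mℓ = 0` is the critical-point equation `E_ℓ'(a) = 0`,
-- since `r⁴ E_ℓ'(r) = 2(M r² - ℓ r + 3Mℓ)`.
theorem Esch_sub_Esch_of_critical {M ℓ a r : ℝ} (ha : a ≠ 0) (hr : r ≠ 0)
    (hcrit : M*a^2 - ℓ*a + 3*M*ℓ = 0) :
    Esch M ℓ a - Esch M ℓ r = (r - a)^2 * (ℓ*(4*M - a)*r + 2*M*ℓ*a) / (a^3 * r^3) := by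
  unfold Esch
  field_simp
  linear_combination (2*r^2*(a - r)) * hcrit

theorem Esch_le_of_critical {M ℓ a r : ℝ} (hM : 0 ≤ M) (hℓ : 0 ≤ ℓ) (ha : 0 < a) (ha4 : a ≤ 4*M)
    (hcrit : M*a^2 - ℓ*a + 3*M*ℓ = 0) (hr : 0 < r) : Esch M ℓ r ≤ Esch M ℓ a := by
  rw [← sub_nonneg, Esch_sub_Esch_of_critical ha.ne' hr.ne' hcrit]
  have : 0 ≤ 4*M - a := by linarith
  positivity

theorem mul_sqrt_one_sub_sq {M ℓ : ℝ} (hM : 0 < M) (hℓ : 12*M^2 ≤ ℓ) :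
    ℓ * √(1 - 12*M^2/ℓ) ^ 2 = ℓ - 12*M^2 := by
  have hℓ0 : 0 < ℓ := lt_of_lt_of_le (by positivity) hℓ
  rw [Real.sq_sqrt (by rw [sub_nonneg, div_le_one hℓ0]; exact hℓ)]
  field_simp

theorem rmaxSch_eq {M ℓ : ℝ} (hM : 0 < M) (hℓ : 12*M^2 ≤ ℓ) :
    rmaxSch M ℓ = 6*M / (1 + √(1 - 12*M^2/ℓ)) := by
  have hs := mul_sqrt_one_sub_sq hM hℓ
  have hs0 := Real.sqrt_nonneg (1 - 12*M^2/ℓ)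
  unfold rmaxSch
  generalize √(1 - 12*M^2/ℓ) = s at *
  have : 1 + s ≠ 0 := by positivity
  field_simp
  linear_combination (-1) * hs

theorem rmaxSch_pos {M ℓ : ℝ} (hM : 0 < M) (hℓ : 12*M^2 ≤ ℓ) : 0 < rmaxSch M ℓ := by
  rw [rmaxSch_eq hM hℓ]
  positivity

theorem rmaxSch_critical {M ℓ : ℝ} (hM : 0 < M) (hℓ : 12*M^2 ≤ ℓ) :
    M * rmaxSch M ℓ ^ 2 - ℓ * rmaxSch M ℓ + 3*M*ℓ = 0 := by
  have hs := mul_sqrt_one_sub_sq hM hℓ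
  have hs0 := Real.sqrt_nonneg (1 - 12*M^2/ℓ)
  rw [rmaxSch_eq hM hℓ]
  generalize √(1 - 12*M^2/ℓ) = s at *
  have : 1 + s ≠ 0 := by positivity
  field_simp
  linear_combination (3*M) * hs

theorem rmaxSch_le_four_mul {M ℓ : ℝ} (hM : 0 < M) (hℓ : 16*M^2 ≤ ℓ) : rmaxSch M ℓ ≤ 4*M := by
  have hℓ0 : 0 < ℓ := lt_of_lt_of_le (by positivity) hℓ
  have hhalf : 1/2 ≤ √(1 - 12*M^2/ℓ) := by
    rw [Real.le_sqrt' (by norm_num), le_sub_comm, div_le_iff₀ hℓ0]; linarith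
  rw [rmaxSch_eq hM (by linarith), div_le_iff₀ (by positivity)]
  nlinarith

theorem Esch_le_Esch_rmaxSch {M ℓ r : ℝ} (hM : 0 < M) (hℓ : 16*M^2 ≤ ℓ) (hr : 0 < r) :
    Esch M ℓ r ≤ Esch M ℓ (rmaxSch M ℓ) := by
  have h12 : 12*M^2 ≤ ℓ := by linarith [sq_nonneg M]
  exact Esch_le_of_critical hM.le (by linarith [sq_nonneg M]) (rmaxSch_pos hM h12)
    (rmaxSch_le_four_mul hM hℓ) (rmaxSch_critical hM h12) hr

theorem stmt9 (M ℓ E : ℝ) (hM : 0 < M) (hE : 1 ≤ E^2)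
    (h : (0 ≤ ℓ ∧ ℓ ≤ 12*M^2) ∨ (12*M^2 < ℓ ∧ Esch M ℓ (rmaxSch M ℓ) < E^2)) :
    (∀ r ∈ Set.Ioi (2*M), Esch M ℓ r < E^2) ∧
    (∀ r ∈ Set.Ioi (2*M), Esch M ℓ r ≠ E^2) := by
  have hlt : ∀ r ∈ Set.Ioi (2*M), Esch M ℓ r < E^2 := by
    intro r (hr : 2*M < r)
    have hr0 : 0 < r := by linarith
    have hℓ0 : 0 ≤ ℓ := by rcases h with ⟨hℓ, -⟩ | ⟨hℓ, -⟩ <;> nlinarith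
    rcases lt_or_ge ℓ (16*M^2) with hℓ16 | hℓ16
    · exact (Esch_lt_one hM hℓ0 hℓ16 hr0).trans_le hE
    · have hmax : Esch M ℓ (rmaxSch M ℓ) < E^2 := by
        rcases h with ⟨-, hℓ⟩ | ⟨-, hmax⟩
        · exact absurd hℓ (by nlinarith)
        · exact hmax
      exact (Esch_le_Esch_rmaxSch hM hℓ16 hr0).trans_lt hmax
  exact ⟨hlt, fun r hr => (hlt r hr).ne⟩
end

section
/- Fix M > 0, ℓ > 12M², and E > 0 with E² < 1 and E^min(ℓ) < E² < E^max(ℓ), and let r₀ < r₁ < r₂ be the three solutions in (2M, ∞) of E_ℓ^Sch(r) = E², with r₀ < r_max^Sch(ℓ) < r₁ < r_min^Sch(ℓ) < r₂. If r : ℝ → (2M, ∞) is continuous, satisfies E_ℓ^Sch(r(τ)) ≤ E² for all τ ∈ ℝ, and r(0) ∈ [r₁, r₂], then r(τ) ∈ [r₁, r₂] for all τ ∈ ℝ (the orbit is trapped between the perihelion r₁ and the aphelion r₂). -/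
open Set Filter Topology

theorem IsPreconnected.forall_lt_of_forall_ne {X α : Type*} [TopologicalSpace X] [LinearOrder α]
    [TopologicalSpace α] [OrderClosedTopology α] {S : Set X} {f : X → α} {c : α} {b : X}
    (hS : IsPreconnected S) (hf : ContinuousOn f S) (hne : ∀ x ∈ S, f x ≠ c) (hb : b ∈ S)
    (hfb : c < f b) : ∀ x ∈ S, c < f x := by
  intro x hx
  by_contra! hfx
  obtain ⟨y, hy, hfy⟩ := hS.intermediate_value hx hb hf ⟨hfx, hfb.le⟩
  exact hne y hy hfy

theorem continuousOn_Esch (M ℓ : ℝ) : ContinuousOn (Esch M ℓ) (Ioi 0) := by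
  unfold Esch
  fun_prop (disch := intro x hx; simp [(mem_Ioi.mp hx).ne'])

theorem tendsto_Esch_atTop (M ℓ : ℝ) : Tendsto (Esch M ℓ) atTop (𝓝 1) := by
  have h : Tendsto (fun r : ℝ => (1 - 2 * M * r⁻¹) * (1 + ℓ * (r⁻¹) ^ 2)) atTop
      (𝓝 ((1 - 2 * M * 0) * (1 + ℓ * 0 ^ 2))) := by
    have := tendsto_inv_atTop_zero (𝕜 := ℝ)
    exact ((this.const_mul _).const_sub _).mul (((this.pow 2).const_mul _).const_add _)
  convert h using 2 <;> simp [Esch, div_eq_mul_inv]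

theorem stmt13_general (M ℓ E : ℝ) (hM : 0 < M) (hE1 : E^2 < 1)
    (hmax : E^2 < Esch M ℓ (rmaxSch M ℓ))
    (r0 r1 r2 : ℝ)
    (h0 : 2*M < r0) (h0m : r0 < rmaxSch M ℓ) (hm1 : rmaxSch M ℓ < r1)
    (huniq : ∀ s ∈ Set.Ioi (2*M), Esch M ℓ s = E^2 → s = r0 ∨ s = r1 ∨ s = r2)
    (r : ℝ → ℝ) (hrc : Continuous r)
    (hbound : ∀ τ : ℝ, Esch M ℓ (r τ) ≤ E^2) (hinit : r 0 ∈ Set.Icc r1 r2) :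
    ∀ τ : ℝ, r τ ∈ Set.Icc r1 r2 := by
  have hr12 : r1 ≤ r2 := hinit.1.trans hinit.2
  have hcont : ContinuousOn (Esch M ℓ) (Ioi r0) :=
    (continuousOn_Esch M ℓ).mono (Ioi_subset_Ioi (by linarith))
  have hroot (s : ℝ) (hs : r0 < s) (heq : Esch M ℓ s = E^2) : s = r1 ∨ s = r2 := by
    rcases huniq s (by simp only [mem_Ioi]; linarith) heq with h | h | h
    exacts [absurd h hs.ne', .inl h, .inr h]
  have hgap : ∀ s ∈ Ioo r0 r1, E^2 < Esch M ℓ s :=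
    isPreconnected_Ioo.forall_lt_of_forall_ne (hcont.mono Ioo_subset_Ioi_self)
      (fun s hs heq => by rcases hroot s hs.1 heq with h | h <;> linarith [hs.2])
      ⟨h0m, hm1⟩ hmax
  obtain ⟨b, hb, hrb⟩ : ∃ b, E^2 < Esch M ℓ b ∧ r2 < b :=
    (((tendsto_Esch_atTop M ℓ).eventually (lt_mem_nhds hE1)).and (eventually_gt_atTop r2)).exists
  have hfar : ∀ s ∈ Ioi r2, E^2 < Esch M ℓ s :=
    isPreconnected_Ioi.forall_lt_of_forall_ne (hcont.mono (Ioi_subset_Ioi (by linarith)))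
      (fun s (hs : r2 < s) heq => by rcases hroot s (by linarith) heq with h | h <;> linarith)
      hrb hb
  have hright : ∀ τ, rmaxSch M ℓ < r τ := fun τ =>
    isPreconnected_univ.forall_lt_of_forall_ne hrc.continuousOn
      (fun σ _ h => (hbound σ).not_gt (h ▸ hmax)) (mem_univ 0) (hm1.trans_le hinit.1) τ
      (mem_univ τ)
  intro τ
  exact ⟨not_lt.mp fun h => (hbound τ).not_gt (hgap _ ⟨h0m.trans (hright τ), h⟩),
    not_lt.mp fun h => (hbound τ).not_gt (hfar _ h)⟩

theorem stmt13 (M ℓ E : ℝ) (hM : 0 < M) (hℓ : 12*M^2 < ℓ) (hE : 0 < E) (hE1 : E^2 < 1)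
    (hmin : Esch M ℓ (rminSch M ℓ) < E^2) (hmax : E^2 < Esch M ℓ (rmaxSch M ℓ))
    (r0 r1 r2 : ℝ)
    (h0 : 2*M < r0) (h0m : r0 < rmaxSch M ℓ) (hm1 : rmaxSch M ℓ < r1)
    (h1m : r1 < rminSch M ℓ) (hm2 : rminSch M ℓ < r2)
    (hr0 : Esch M ℓ r0 = E^2) (hr1 : Esch M ℓ r1 = E^2) (hr2 : Esch M ℓ r2 = E^2)
    (huniq : ∀ s ∈ Set.Ioi (2*M), Esch M ℓ s = E^2 → s = r0 ∨ s = r1 ∨ s = r2)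
    (r : ℝ → ℝ) (hrc : Continuous r) (hrdom : ∀ τ : ℝ, r τ ∈ Set.Ioi (2*M))
    (hbound : ∀ τ : ℝ, Esch M ℓ (r τ) ≤ E^2) (hinit : r 0 ∈ Set.Icc r1 r2) :
    ∀ τ : ℝ, r τ ∈ Set.Icc r1 r2 :=
  stmt13_general M ℓ E hM hE1 hmax r0 r1 r2 h0 h0m hm1 huniq r hrc hbound hinit
end

section
/- Fix M > 0, and for (E, ℓ) with √(8/9) < E < 1 and ℓ_lb(E) < ℓ < ℓ_ub(E), denote by r₀^Sch(E,ℓ) < r₁^Sch(E,ℓ) < r₂^Sch(E,ℓ) the three roots of E_ℓ^Sch(r) = E² in (2M, ∞). Then: (i) for fixed admissible E and ℓ < ℓ' both admissible, r₀^Sch(E,ℓ') < r₀^Sch(E,ℓ), r₁^Sch(E,ℓ) < r₁^Sch(E,ℓ'), and r₂^Sch(E,ℓ') < r₂^Sch(E,ℓ); (ii) for fixed admissible ℓ and E < E' both admissible, r₀^Sch(E,ℓ) < r₀^Sch(E',ℓ), r₁^Sch(E',ℓ) < r₁^Sch(E,ℓ), and r₂^Sch(E,ℓ) < r₂^Sch(E',ℓ).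 -/
open Set

theorem cubic_eq_mul_of_three_roots {K : Type*} [Field K] {u p q s a b c : K}
    (hab : a ≠ b) (hac : a ≠ c) (hbc : b ≠ c)
    (ha : u*a^3 + p*a^2 + q*a + s = 0) (hb : u*b^3 + p*b^2 + q*b + s = 0)
    (hc : u*c^3 + p*c^2 + q*c + s = 0) (x : K) :
    u*x^3 + p*x^2 + q*x + s = u*(x-a)*(x-b)*(x-c) := by
  have hD : (a-b)*((a-c)*(b-c)) ≠ 0 :=
    mul_ne_zero (sub_ne_zero.2 hab) (mul_ne_zero (sub_ne_zero.2 hac) (sub_ne_zero.2 hbc))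
  apply mul_right_cancel₀ hD
  linear_combination ((x-b)*(x-c)*(b-c)) * ha - ((a-c)*(x-a)*(x-c)) * hb
    + ((a-b)*(x-a)*(x-b)) * hc

section CubicSign

variable {R : Type*} [CommRing R] [LinearOrder R] [IsStrictOrderedRing R] {u a b c x : R}

theorem lt_or_mem_Ioo_of_cubic_neg (hu : 0 < u) (hbc : b < c)
    (h : u*(x-a)*(x-b)*(x-c) < 0) : x < a ∨ x ∈ Ioo b c := by
  simp only [mem_Ioo]
  by_contra! hx
  obtain ⟨hax, hcx_of_bx⟩ := hx
  rcases le_or_gt x b with hxb | hbx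
  · nlinarith [mul_nonneg (mul_nonneg hu.le (sub_nonneg.2 hax))
      (mul_nonneg_of_nonpos_of_nonpos (sub_nonpos.2 hxb) (sub_nonpos.2 (hxb.trans hbc.le)))]
  · have hcx := hcx_of_bx hbx
    nlinarith [mul_nonneg (mul_nonneg hu.le (sub_nonneg.2 hax))
      (mul_nonneg (sub_nonneg.2 hbx.le) (sub_nonneg.2 hcx))]

theorem mem_Ioo_or_lt_of_cubic_pos (hu : 0 < u) (hab : a < b)
    (h : 0 < u*(x-a)*(x-b)*(x-c)) : x ∈ Ioo a b ∨ c < x := by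
  simp only [mem_Ioo]
  by_contra! hx
  obtain ⟨hbx_of_ax, hxc⟩ := hx
  rcases le_or_gt x a with hxa | hax
  · nlinarith [mul_nonneg (mul_nonneg hu.le (mul_nonneg_of_nonpos_of_nonpos
      (sub_nonpos.2 hxa) (sub_nonpos.2 (hxa.trans hab.le)))) (sub_nonneg.2 hxc)]
  · have hbx := hbx_of_ax hax
    nlinarith [mul_nonneg (mul_nonneg hu.le (mul_nonneg (sub_nonneg.2 hax.le) (sub_nonneg.2 hbx)))
      (sub_nonneg.2 hxc)]

end CubicSign

theorem rminSch_strictMonoOn {M : ℝ} (hM : 0 < M) : StrictMonoOn (rminSch M) (Ioi 0) := by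
  intro ℓ hℓ ℓ' hℓ' hlt
  rw [mem_Ioi] at hℓ hℓ'
  have hsqrt : Real.sqrt (1 - 12*M^2/ℓ) ≤ Real.sqrt (1 - 12*M^2/ℓ') := by
    gcongr
  unfold rminSch
  exact mul_lt_mul (by gcongr) (by linarith) (by positivity) (by positivity)

def schCubic (M ℓ E r : ℝ) : ℝ := (1 - E^2)*r^3 - 2*M*r^2 + ℓ*r - 2*M*ℓ

theorem schCubic_eq_zero_of_Esch_eq {M ℓ E r : ℝ} (hr : r ≠ 0) (h : Esch M ℓ r = E^2) :
    schCubic M ℓ E r = 0 := by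
  unfold Esch at h
  field_simp at h
  unfold schCubic
  linear_combination h

structure IsSchRootTriple (M E ℓ a b c : ℝ) : Prop where
  two_mul_lt : 2*M < a
  lt_rmax : a < rmaxSch M ℓ
  rmax_lt : rmaxSch M ℓ < b
  lt_rmin : b < rminSch M ℓ
  rmin_lt : rminSch M ℓ < c
  Esch_fst : Esch M ℓ a = E^2
  Esch_snd : Esch M ℓ b = E^2
  Esch_thd : Esch M ℓ c = E^2

namespace IsSchRootTriple

variable {M E E' ℓ ℓ' a b c a' b' c' : ℝ}

theorem fst_lt_snd (h : IsSchRootTriple M E ℓ a b c) : a < b := h.lt_rmax.trans h.rmax_lt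

theorem snd_lt_thd (h : IsSchRootTriple M E ℓ a b c) : b < c := h.lt_rmin.trans h.rmin_lt

theorem schCubic_eq_mul (hM : 0 ≤ M) (h : IsSchRootTriple M E ℓ a b c) (x : ℝ) :
    schCubic M ℓ E x = (1 - E^2)*(x-a)*(x-b)*(x-c) := by
  have hab := h.fst_lt_snd
  have hbc := h.snd_lt_thd
  have root {r : ℝ} (hr : 2*M < r) (hE : Esch M ℓ r = E^2) :
      (1 - E^2)*r^3 + (-2*M)*r^2 + ℓ*r + (-2*M*ℓ) = 0 := by
    have := schCubic_eq_zero_of_Esch_eq (by linarith) hE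
    unfold schCubic at this
    linear_combination this
  have hfac := cubic_eq_mul_of_three_roots hab.ne (hab.trans hbc).ne hbc.ne
    (root h.two_mul_lt h.Esch_fst) (root (by linarith [h.two_mul_lt]) h.Esch_snd)
    (root (by linarith [h.two_mul_lt]) h.Esch_thd) x
  unfold schCubic
  linear_combination hfac

theorem ell_pos (hM : 0 < M) (hE : E^2 < 1) (h : IsSchRootTriple M E ℓ a b c) : 0 < ℓ := by
  have ha : 0 < a := by linarith [h.two_mul_lt]
  have hb : 0 < b := ha.trans h.fst_lt_snd
  have hc : 0 < c := hb.trans h.snd_lt_thd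
  have vieta : 2*M*ℓ = (1 - E^2)*(a*b*c) := by
    have := h.schCubic_eq_mul hM.le 0
    unfold schCubic at this
    linear_combination -this
  have : 0 < 2*M*ℓ := by
    rw [vieta]
    exact mul_pos (by linarith) (by positivity)
  exact pos_of_mul_pos_right this (by positivity)

theorem interlace_of_ell_lt (hM : 0 < M) (hE : E^2 < 1) (h : IsSchRootTriple M E ℓ a b c)
    (h' : IsSchRootTriple M E ℓ' a' b' c') (hℓ : ℓ < ℓ') : a' < a ∧ b < b' ∧ c' < c := by
  have hu : 0 < 1 - E^2 := by linarith
  have hbc' : b < c' := calc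
    b < rminSch M ℓ := h.lt_rmin
    _ < rminSch M ℓ' := rminSch_strictMonoOn hM (h.ell_pos hM hE) (h.ell_pos hM hE |>.trans hℓ) hℓ
    _ < c' := h'.rmin_lt
  have shift (x : ℝ) : schCubic M ℓ' E x = schCubic M ℓ E x + (ℓ' - ℓ)*(x - 2*M) := by
    unfold schCubic; ring
  have pos_at {x : ℝ} (hx : 2*M < x) (hEx : Esch M ℓ x = E^2) :
      0 < (1 - E^2)*(x-a')*(x-b')*(x-c') := by
    rw [← h'.schCubic_eq_mul hM.le, shift, schCubic_eq_zero_of_Esch_eq (by linarith) hEx, zero_add]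
    exact mul_pos (sub_pos.2 hℓ) (sub_pos.2 hx)
  have neg_at {x : ℝ} (hx : 2*M < x) (hEx : Esch M ℓ' x = E^2) :
      (1 - E^2)*(x-a)*(x-b)*(x-c) < 0 := by
    have := shift x
    rw [schCubic_eq_zero_of_Esch_eq (by linarith) hEx, h.schCubic_eq_mul hM.le] at this
    linarith [mul_pos (sub_pos.2 hℓ) (sub_pos.2 hx)]
  have hb := h.fst_lt_snd
  have hb' := h'.fst_lt_snd
  refine ⟨?_, ?_, ?_⟩
  · obtain ⟨ha'a, -⟩ | hc'a := mem_Ioo_or_lt_of_cubic_pos hu hb' (pos_at h.two_mul_lt h.Esch_fst)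
    · exact ha'a
    · linarith
  · obtain ⟨-, hbb'⟩ | hc'b :=
      mem_Ioo_or_lt_of_cubic_pos hu hb' (pos_at (by linarith [h.two_mul_lt]) h.Esch_snd)
    · exact hbb'
    · linarith
  · obtain hc'a | ⟨-, hc'c⟩ :=
      lt_or_mem_Ioo_of_cubic_neg hu h.snd_lt_thd (neg_at (by linarith [h.two_mul_lt]) h'.Esch_thd)
    · linarith
    · exact hc'c

theorem interlace_of_energy_sq_lt (hM : 0 ≤ M) (hE' : E'^2 < 1) (h : IsSchRootTriple M E ℓ a b c)
    (h' : IsSchRootTriple M E' ℓ a' b' c') (hE : E^2 < E'^2) : a < a' ∧ b' < b ∧ c < c' := by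
  have hu : 0 < 1 - E'^2 := by linarith
  have neg_at {x : ℝ} (hx : 2*M < x) (hEx : Esch M ℓ x = E^2) :
      (1 - E'^2)*(x-a')*(x-b')*(x-c') < 0 := by
    have hP : schCubic M ℓ E' x = schCubic M ℓ E x - (E'^2 - E^2)*x^3 := by
      unfold schCubic; ring
    rw [← h'.schCubic_eq_mul hM, hP, schCubic_eq_zero_of_Esch_eq (by linarith) hEx, zero_sub,
      neg_neg_iff_pos]
    exact mul_pos (sub_pos.2 hE) (pow_pos (by linarith) 3)
  have hc' := h'.snd_lt_thd
  refine ⟨?_, ?_, ?_⟩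
  · obtain haa' | ⟨hb'a, -⟩ := lt_or_mem_Ioo_of_cubic_neg hu hc' (neg_at h.two_mul_lt h.Esch_fst)
    · exact haa'
    · linarith [h.lt_rmax, h'.rmax_lt]
  · obtain hba' | ⟨hb'b, -⟩ := lt_or_mem_Ioo_of_cubic_neg hu hc'
      (neg_at (by linarith [h.two_mul_lt, h.fst_lt_snd]) h.Esch_snd)
    · linarith [h'.lt_rmax, h.rmax_lt]
    · exact hb'b
  · obtain hca' | ⟨-, hcc'⟩ := lt_or_mem_Ioo_of_cubic_neg hu hc'
      (neg_at (by linarith [h.two_mul_lt, h.fst_lt_snd, h.snd_lt_thd]) h.Esch_thd)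
    · linarith [h'.lt_rmax, h'.rmax_lt, h'.lt_rmin, h.rmin_lt]
    · exact hcc'

end IsSchRootTriple

theorem stmt15 (M : ℝ) (hM : 0 < M)
    (r0 r1 r2 : ℝ → ℝ → ℝ)
    (hroots : ∀ E ℓ : ℝ, Real.sqrt (8/9) < E → E < 1 → llb M E < ℓ → ℓ < lub M E →
      2*M < r0 E ℓ ∧ r0 E ℓ < rmaxSch M ℓ ∧ rmaxSch M ℓ < r1 E ℓ ∧ r1 E ℓ < rminSch M ℓ ∧
      rminSch M ℓ < r2 E ℓ ∧
      Esch M ℓ (r0 E ℓ) = E^2 ∧ Esch M ℓ (r1 E ℓ) = E^2 ∧ Esch M ℓ (r2 E ℓ) = E^2) :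
    (∀ E ℓ ℓ' : ℝ, Real.sqrt (8/9) < E → E < 1 →
       llb M E < ℓ → ℓ < lub M E → llb M E < ℓ' → ℓ' < lub M E → ℓ < ℓ' →
       r0 E ℓ' < r0 E ℓ ∧ r1 E ℓ < r1 E ℓ' ∧ r2 E ℓ' < r2 E ℓ) ∧
    (∀ E E' ℓ : ℝ, Real.sqrt (8/9) < E → E < 1 → Real.sqrt (8/9) < E' → E' < 1 →
       llb M E < ℓ → ℓ < lub M E → llb M E' < ℓ → ℓ < lub M E' → E < E' →
       r0 E ℓ < r0 E' ℓ ∧ r1 E' ℓ < r1 E ℓ ∧ r2 E ℓ < r2 E' ℓ) := by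
  have triple {E ℓ : ℝ} (hE : Real.sqrt (8/9) < E) (hE1 : E < 1) (hℓ : llb M E < ℓ)
      (hℓ1 : ℓ < lub M E) : IsSchRootTriple M E ℓ (r0 E ℓ) (r1 E ℓ) (r2 E ℓ) := by
    obtain ⟨h₁, h₂, h₃, h₄, h₅, h₆, h₇, h₈⟩ := hroots E ℓ hE hE1 hℓ hℓ1
    exact ⟨h₁, h₂, h₃, h₄, h₅, h₆, h₇, h₈⟩
  have energy_pos {E : ℝ} (hE : Real.sqrt (8/9) < E) : 0 < E :=
    (Real.sqrt_nonneg _).trans_lt hE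
  refine ⟨fun E ℓ ℓ' hE hE1 hℓ hℓ1 hℓ' hℓ'1 hlt => ?_,
    fun E E' ℓ hE hE1 hE' hE'1 hℓ hℓ1 hℓ' hℓ'1 hlt => ?_⟩
  · have hE2 : E^2 < 1 := by nlinarith [energy_pos hE]
    exact (triple hE hE1 hℓ hℓ1).interlace_of_ell_lt hM hE2 (triple hE hE1 hℓ' hℓ'1) hlt
  · have hE'2 : E'^2 < 1 := by nlinarith [energy_pos hE']
    exact (triple hE hE1 hℓ hℓ1).interlace_of_energy_sq_lt hM.le hE'2 (triple hE' hE'1 hℓ' hℓ'1)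
      (pow_lt_pow_left₀ hlt (energy_pos hE).le two_ne_zero)
end
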